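/- arXiv:2212.04750 — 3 statements merged into one kernel-verified Lean document; each statement's English description precedes it below -/
import Mathlib

section
/- Let E be a metric space, T > 0, and A ⊆ E. The map x ↦ τ_{Å}(x) (entrance time of the interior of A) is upper semi-continuous on C([0,T],E) with the topology of uniform convergence. -/
open Set Filter Topology
open scoped ENNReal

/-- Entrance time of a set `S` for a continuous path `x : [0,T] → E`,
with values in the extended nonnegative reals (`sInf ∅ = ∞`). -/
noncomputable def entranceTime {E : Type*} [MetricSpace E] (T : ℝ) (S : Set E)
    (x : C(Set.Icc (0:ℝ) T, E)) : ℝ≥0∞ :=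
  sInf ((fun t : Set.Icc (0:ℝ) T => ENNReal.ofReal (t : ℝ)) '' {t | x t ∈ S})

/-- The entrance time of the interior of `A` is upper semi-continuous on
`C([0,T],E)` with the topology of uniform convergence. -/
theorem entranceTime_interior_upperSemicontinuous
    {E : Type*} [MetricSpace E] (T : ℝ) (hT : 0 < T) (A : Set E) :
    UpperSemicontinuous (fun x : C(Set.Icc (0:ℝ) T, E) => entranceTime T (interior A) x) := by
  intro x c hc
  obtain ⟨a, ha, hac⟩ := exists_lt_of_csInf_lt (by
    rw [Set.nonempty_iff_ne_empty]
    intro h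
    simp only [entranceTime, h, sInf_empty] at hc
    exact (not_top_lt hc)) hc
  obtain ⟨t, ht, rfl⟩ := ha
  have hopen : IsOpen {y : C(Set.Icc (0:ℝ) T, E) | y t ∈ interior A} :=
    isOpen_interior.preimage (continuous_eval_const t)
  filter_upwards [hopen.mem_nhds ht] with y hy
  calc entranceTime T (interior A) y ≤ ENNReal.ofReal (t : ℝ) :=
        csInf_le (OrderBot.bddBelow _) ⟨t, hy, rfl⟩
    _ < c := hac
end

section
/- Let E be a metric space, T > 0, and A, B ⊆ E. The set { x ∈ C([0,T],E) : τ_{Å}(x) < τ_{B̄}(x) } is an open subset of C([0,T],E) for the topology of uniform convergence. -/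
open Set Filter Topology
open scoped ENNReal

/-! The uniform topology on `C([0,T], E)` is the compact-open one, whose subbasic open sets
`{x | MapsTo x K U}` make two conditions open: `x` is in the interior of `A` at some time
`t`, and `x` stays out of the closed set `closure B` on the compact interval `[0, t]`. The
strict inequality of entrance times is equivalent to the existence of such a `t`, because the
entrance time of a closed set, when finite, is attained. -/

section

variable {E : Type*} [MetricSpace E] {T : ℝ} {S F : Set E} {x : C(Set.Icc (0:ℝ) T, E)}

theorem entranceTime_le_ofReal {t : Set.Icc (0:ℝ) T} (ht : x t ∈ S) :
    entranceTime T S x ≤ ENNReal.ofReal t :=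
  sInf_le ⟨t, ht, rfl⟩

theorem entranceTime_eq_top_or_exists_eq_ofReal (hF : IsClosed F) :
    entranceTime T F x = ⊤ ∨ ∃ s, x s ∈ F ∧ entranceTime T F x = ENNReal.ofReal s := by
  rcases eq_empty_or_nonempty {t | x t ∈ F} with hempty | hne
  · left
    simp [entranceTime, hempty]
  · right
    have hcompact : IsCompact ((fun t : Set.Icc (0:ℝ) T => ENNReal.ofReal (t : ℝ)) ''
        {t | x t ∈ F}) :=
      ((hF.preimage x.continuous).isCompact).image
        (ENNReal.continuous_ofReal.comp continuous_subtype_val)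
    obtain ⟨s, hs, hsInf⟩ := hcompact.sInf_mem (hne.image _)
    exact ⟨s, hs, hsInf.symm⟩

theorem entranceTime_lt_entranceTime_iff_exists_mapsTo (hF : IsClosed F) :
    entranceTime T S x < entranceTime T F x ↔
      ∃ t : Set.Icc (0:ℝ) T, x t ∈ S ∧ MapsTo x {s | (s : ℝ) ≤ t} Fᶜ := by
  constructor
  · intro hlt
    obtain ⟨_, ⟨t, htS, rfl⟩, htF⟩ := sInf_lt_iff.mp hlt
    refine ⟨t, htS, fun s hst hsF => ?_⟩
    have : ENNReal.ofReal t < ENNReal.ofReal s := htF.trans_le (entranceTime_le_ofReal hsF)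
    exact (ENNReal.ofReal_lt_ofReal_iff'.mp this).1.not_ge hst
  · rintro ⟨t, htS, hmaps⟩
    refine (entranceTime_le_ofReal htS).trans_lt ?_
    rcases entranceTime_eq_top_or_exists_eq_ofReal (x := x) hF with htop | ⟨s, hsF, hs⟩
    · simp [htop]
    · have hts : (t : ℝ) < s := not_le.mp fun hst => hmaps hst hsF
      rw [hs, ENNReal.ofReal_lt_ofReal_iff']
      exact ⟨hts, t.2.1.trans_lt hts⟩

end

theorem isOpen_entranceTime_interior_lt_entranceTime_closure_general
    {E : Type*} [MetricSpace E] (T : ℝ) (A B : Set E) :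
    IsOpen {x : C(Set.Icc (0:ℝ) T, E) |
      entranceTime T (interior A) x < entranceTime T (closure B) x} := by
  simp_rw [entranceTime_lt_entranceTime_iff_exists_mapsTo isClosed_closure, ofPred_exists]
  refine isOpen_iUnion fun t => ?_
  refine (isOpen_interior.preimage (continuous_eval_const t)).inter ?_
  exact ContinuousMap.isOpen_setOfPred_mapsTo
    (isClosed_le continuous_subtype_val continuous_const).isCompact isClosed_closure.isOpen_compl

/-- The set of paths entering the interior of `A` strictly before the closure of `B`
is open in `C([0,T],E)` with the topology of uniform convergence. -/
theorem isOpen_entranceTime_interior_lt_entranceTime_closure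
    {E : Type*} [MetricSpace E] (T : ℝ) (hT : 0 < T) (A B : Set E) :
    IsOpen {x : C(Set.Icc (0:ℝ) T, E) |
      entranceTime T (interior A) x < entranceTime T (closure B) x} :=
  isOpen_entranceTime_interior_lt_entranceTime_closure_general T A B
end

section
/- Varadhan upper bound with ε-dependent nonnegative potential: let (μ_ε) be a family of Borel probability measures on a Polish space X satisfying the LDP upper bound with a good rate function I (lower semi-continuous with compact sublevel sets; limsup ε log μ_ε(C) ≤ −inf_C I for every closed C). Let (V_ε) be measurable functions X → [0,+∞] and define V₋(x) = liminf_{ε→0, y→x} V_ε(y). Then limsup_{ε→0} ε log ∫ exp(−V_ε/ε) dμ_ε ≤ − inf_X (I + V₋). -/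
open MeasureTheory Filter Topology Set
open scoped ENNReal

/-- `ε log a` for `a ∈ [0,∞]`, with values in the extended reals. -/
noncomputable def epsLog (ε : ℝ) (a : ℝ≥0∞) : EReal :=
  (ε : EReal) * (if a = 0 then (⊥ : EReal) else if a = ⊤ then (⊤ : EReal)
    else (Real.log a.toReal : EReal))

/-- `exp(-v/ε)` for a potential value `v ∈ [0,∞]`, as an element of `[0,∞]`. -/
noncomputable def expNegDiv' (v : ℝ≥0∞) (ε : ℝ) : ℝ≥0∞ :=
  if v = ⊤ then 0 else ENNReal.ofReal (Real.exp (-(v.toReal) / ε))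

/-- Lower semi-continuous envelope `V₋(x) = liminf_{ε→0⁺, y→x} V_ε(y)`. -/
noncomputable def lowerEnv {X : Type*} [TopologicalSpace X] (V : ℝ → X → ℝ≥0∞) (x : X) :
    ℝ≥0∞ :=
  Filter.liminf (fun p : ℝ × X => V p.1 p.2) ((nhdsWithin 0 (Set.Ioi 0)) ×ˢ nhds x)

/-!
Cover the compact sublevel set `{I ≤ M}` by finitely many closed neighbourhoods `D` on which
`I ≥ a` and, for small `ε`, `V_ε ≥ b` with `a + b ≥ M`; this is possible by lower semicontinuity
of `I` and the definition of `V₋`. On the closed complement `S` of their interiors `I > M`, and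
`∫ e^{-V_ε/ε} dμ_ε ≤ μ_ε(S) + Σ e^{-b/ε} μ_ε(D)`. The LDP upper bound makes every term at most
`e^{-(M + o(1))/ε}`, and on this exponential scale a finite sum is no larger than its largest
term.
-/

open scoped NNReal

section epsLog

variable {ε : ℝ}

lemma epsLog_zero (hε : 0 < ε) : epsLog ε 0 = ⊥ := by
  simp [epsLog, EReal.coe_mul_bot_of_pos hε]

lemma epsLog_top (hε : 0 < ε) : epsLog ε ⊤ = ⊤ := by
  simp [epsLog, EReal.coe_mul_top_of_pos hε]

lemma epsLog_of_ne_zero_of_ne_top {a : ℝ≥0∞} (h0 : a ≠ 0) (ht : a ≠ ⊤) :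
    epsLog ε a = ((ε * Real.log a.toReal : ℝ) : EReal) := by
  simp [epsLog, h0, ht, EReal.coe_mul]

lemma epsLog_monotone (hε : 0 < ε) : Monotone (epsLog ε) := by
  intro a b hab
  rcases eq_or_ne a 0 with rfl | ha0
  · simp [epsLog_zero hε]
  rcases eq_or_ne b ⊤ with rfl | hbt
  · simp [epsLog_top hε]
  have hat : a ≠ ⊤ := ne_top_of_le_ne_top hbt hab
  have hb0 : b ≠ 0 := (pos_of_ne_zero ha0 |>.trans_le hab).ne'
  rw [epsLog_of_ne_zero_of_ne_top ha0 hat, epsLog_of_ne_zero_of_ne_top hb0 hbt,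
    EReal.coe_le_coe_iff]
  gcongr
  exact ENNReal.toReal_pos ha0 hat

lemma epsLog_ofReal_mul (hε : 0 < ε) {c : ℝ} (hc : 0 < c) (m : ℝ≥0∞) :
    epsLog ε (ENNReal.ofReal c * m) = ((ε * Real.log c : ℝ) : EReal) + epsLog ε m := by
  have hc0 : ENNReal.ofReal c ≠ 0 := ENNReal.ofReal_ne_zero_iff.mpr hc
  rcases eq_or_ne m 0 with rfl | hm0
  · simp [epsLog_zero hε]
  rcases eq_or_ne m ⊤ with rfl | hmt
  · rw [ENNReal.mul_top hc0, epsLog_top hε, EReal.coe_add_top]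
  rw [epsLog_of_ne_zero_of_ne_top (mul_ne_zero hc0 hm0)
      (ENNReal.mul_ne_top ENNReal.ofReal_ne_top hmt), epsLog_of_ne_zero_of_ne_top hm0 hmt, ENNReal.toReal_mul, ENNReal.toReal_ofReal hc.le,
    Real.log_mul hc.ne' (ENNReal.toReal_pos hm0 hmt).ne', ← EReal.coe_add, mul_add]

lemma epsLog_ofReal_exp_mul (hε : 0 < ε) (b : ℝ) (m : ℝ≥0∞) :
    epsLog ε (ENNReal.ofReal (Real.exp (-b / ε)) * m) = ((-b : ℝ) : EReal) + epsLog ε m := by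
  rw [epsLog_ofReal_mul hε (Real.exp_pos _), Real.log_exp, mul_div_cancel₀ _ hε.ne']

end epsLog

lemma expNegDiv'_le_one {v : ℝ≥0∞} {ε : ℝ} (hε : 0 ≤ ε) : expNegDiv' v ε ≤ 1 := by
  unfold expNegDiv'
  split_ifs
  · exact zero_le_one
  · rw [ENNReal.ofReal_le_one, Real.exp_le_one_iff]
    exact div_nonpos_of_nonpos_of_nonneg (neg_nonpos.mpr ENNReal.toReal_nonneg) hε

lemma expNegDiv'_le_ofReal_exp {v : ℝ≥0∞} {ε : ℝ} {b : ℝ≥0} (hε : 0 ≤ ε) (hb : (b : ℝ≥0∞) ≤ v) :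
    expNegDiv' v ε ≤ ENNReal.ofReal (Real.exp (-b / ε)) := by
  unfold expNegDiv'
  split_ifs with hvt
  · exact zero_le
  · gcongr
    simpa using ENNReal.toReal_mono hvt hb

lemma lintegral_le_measure_add_sum {α ι : Type*} [MeasurableSpace α] (μ : Measure α)
    {f : α → ℝ≥0∞} {S : Set α} {t : Finset ι} {D : ι → Set α} {c : ι → ℝ≥0∞}
    (hS : MeasurableSet S) (hD : ∀ i ∈ t, MeasurableSet (D i)) (hfS : ∀ y ∈ S, f y ≤ 1)
    (hcover : Sᶜ ⊆ ⋃ i ∈ t, D i) (hfD : ∀ i ∈ t, ∀ y ∈ D i, f y ≤ c i) :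
    ∫⁻ y, f y ∂μ ≤ μ S + ∑ i ∈ t, c i * μ (D i) := by
  have hpt : ∀ y, f y ≤ S.indicator (fun _ => 1) y + ∑ i ∈ t, (D i).indicator (fun _ => c i) y := by
    intro y
    by_cases hy : y ∈ S
    · rw [indicator_of_mem hy]
      exact (hfS y hy).trans le_self_add
    · obtain ⟨i, hi, hyi⟩ := mem_iUnion₂.mp (hcover hy)
      calc f y ≤ (D i).indicator (fun _ => c i) y := by
            rw [indicator_of_mem hyi]; exact hfD i hi y hyi
        _ ≤ ∑ j ∈ t, (D j).indicator (fun _ => c j) y :=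
            Finset.single_le_sum (f := fun j => (D j).indicator (fun _ => c j) y)
              (fun _ _ => zero_le) hi
        _ ≤ _ := le_add_self
  calc ∫⁻ y, f y ∂μ
      ≤ ∫⁻ y, (S.indicator (fun _ => 1) y + ∑ i ∈ t, (D i).indicator (fun _ => c i) y) ∂μ :=
        lintegral_mono hpt
    _ = μ S + ∑ i ∈ t, c i * μ (D i) := by
        rw [lintegral_add_left (measurable_const.indicator hS),
          lintegral_finsetSum' t fun i hi => (measurable_const.indicator (hD i hi)).aemeasurable,
          lintegral_indicator_const hS, one_mul]
        exact congrArg _ (Finset.sum_congr rfl fun i hi => lintegral_indicator_const (hD i hi) _)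

lemma EReal.limsup_const_add_le {α : Type*} {f : Filter α} [f.NeBot] {w : α → EReal} {a : EReal}
    (b : ℝ) (h : limsup w f ≤ a) : limsup (fun x => (b : EReal) + w x) f ≤ b + a := by
  have hsplit := EReal.limsup_add_le (f := f) (u := fun _ => (b : EReal)) (v := w)
    (Or.inl (by simp)) (Or.inl (by simp))
  rw [limsup_const] at hsplit
  exact hsplit.trans (add_le_add_right h _)

section limsupEpsLog

variable {A : EReal}

lemma limsup_epsLog_exp_mul_le {m : ℝ → ℝ≥0∞} (b : ℝ)
    (h : limsup (fun ε => epsLog ε (m ε)) (𝓝[>] 0) ≤ A) :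
    limsup (fun ε => epsLog ε (ENNReal.ofReal (Real.exp (-b / ε)) * m ε)) (𝓝[>] 0) ≤
      ((-b : ℝ) : EReal) + A := by
  have heq : (fun ε => ((-b : ℝ) : EReal) + epsLog ε (m ε)) =ᶠ[𝓝[>] 0]
      fun ε => epsLog ε (ENNReal.ofReal (Real.exp (-b / ε)) * m ε) := by
    filter_upwards [self_mem_nhdsWithin] with ε hε using (epsLog_ofReal_exp_mul hε b _).symm
  rw [← limsup_congr heq]
  exact EReal.limsup_const_add_le _ h

lemma limsup_epsLog_add_le {u v : ℝ → ℝ≥0∞}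
    (hu : limsup (fun ε => epsLog ε (u ε)) (𝓝[>] 0) ≤ A)
    (hv : limsup (fun ε => epsLog ε (v ε)) (𝓝[>] 0) ≤ A) :
    limsup (fun ε => epsLog ε (u ε + v ε)) (𝓝[>] 0) ≤ A := by
  set g : ℝ → EReal := fun ε => ((ε * Real.log 2 : ℝ) : EReal)
  have hg : Tendsto g (𝓝[>] 0) (𝓝 0) := by
    have hgc : Continuous g := continuous_coe_real_ereal.comp (continuous_mul_const _)
    simpa [g] using (hgc.tendsto 0).mono_left nhdsWithin_le_nhds
  have hle : ∀ᶠ ε in 𝓝[>] 0, epsLog ε (u ε + v ε) ≤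
      (g + fun ε => max (epsLog ε (u ε)) (epsLog ε (v ε))) ε := by
    filter_upwards [self_mem_nhdsWithin] with ε hε
    calc epsLog ε (u ε + v ε) ≤ epsLog ε (ENNReal.ofReal 2 * max (u ε) (v ε)) := by
          refine epsLog_monotone hε ?_
          rw [ENNReal.ofReal_ofNat, two_mul]
          exact add_le_add le_sup_left le_sup_right
      _ = g ε + max (epsLog ε (u ε)) (epsLog ε (v ε)) := by
          rw [epsLog_ofReal_mul hε two_pos, (epsLog_monotone hε).map_max]
  calc limsup (fun ε => epsLog ε (u ε + v ε)) (𝓝[>] 0)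
      ≤ limsup (g + fun ε => max (epsLog ε (u ε)) (epsLog ε (v ε))) (𝓝[>] 0) :=
        limsup_le_limsup hle
    _ ≤ limsup g (𝓝[>] 0) + limsup (fun ε => max (epsLog ε (u ε)) (epsLog ε (v ε))) (𝓝[>] 0) :=
        EReal.limsup_add_le (Or.inl (by simp [hg.limsup_eq])) (Or.inl (by simp [hg.limsup_eq]))
    _ ≤ A := by
        rw [hg.limsup_eq, zero_add, limsup_max]
        exact max_le hu hv

lemma limsup_epsLog_sum_le {ι : Type*} (t : Finset ι) (g : ι → ℝ → ℝ≥0∞)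
    (h : ∀ i ∈ t, limsup (fun ε => epsLog ε (g i ε)) (𝓝[>] 0) ≤ A) :
    limsup (fun ε => epsLog ε (∑ i ∈ t, g i ε)) (𝓝[>] 0) ≤ A := by
  classical
  induction t using Finset.induction with
  | empty =>
      refine limsup_le_of_le (by isBoundedDefault) ?_
      filter_upwards [self_mem_nhdsWithin] with ε hε
      rw [Finset.sum_empty, epsLog_zero hε]
      exact bot_le
  | insert i t hi ih =>
      simp only [Finset.sum_insert hi]
      exact limsup_epsLog_add_le (h i (Finset.mem_insert_self i t))
        (ih fun j hj => h j (Finset.mem_insert_of_mem hj))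

end limsupEpsLog

lemma limsup_epsLog_le_of_le_rate {X : Type*} [TopologicalSpace X] [MeasurableSpace X]
    {μ : ℝ → Measure X} {I : X → ℝ≥0∞}
    (hLDP : ∀ C : Set X, IsClosed C →
      limsup (fun ε => epsLog ε (μ ε C)) (𝓝[>] 0) ≤ -(⨅ x ∈ C, (I x : EReal)))
    {C : Set X} (hC : IsClosed C) {a : EReal} (ha : ∀ y ∈ C, a ≤ I y) :
    limsup (fun ε => epsLog ε (μ ε C)) (𝓝[>] 0) ≤ -a :=
  (hLDP C hC).trans (EReal.neg_le_neg_iff.mpr (le_iInf₂ ha))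

lemma exists_nnreal_le_add_of_lt_add {M : ℝ} {p q : ℝ≥0∞} (h : (M : EReal) < p + q) :
    ∃ a b : ℝ≥0, M ≤ a + b ∧ (a = 0 ∨ (a : ℝ≥0∞) < p) ∧ (b = 0 ∨ (b : ℝ≥0∞) < q) := by
  rcases le_or_gt M 0 with hM | hM
  · exact ⟨0, 0, by simpa using hM, Or.inl rfl, Or.inl rfl⟩
  lift M to ℝ≥0 using hM.le
  rw [← EReal.coe_nnreal_eq_coe_real, ← EReal.coe_ennreal_add,
    EReal.coe_ennreal_lt_coe_ennreal_iff] at h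
  rcases eq_or_ne p 0 with rfl | hp
  · exact ⟨0, M, by simp, Or.inl rfl, Or.inr (by simpa using h)⟩
  rcases eq_or_ne q 0 with rfl | hq
  · exact ⟨M, 0, by simp, Or.inr (by simpa using h), Or.inl rfl⟩
  obtain ⟨a, ha, b, hb, hab⟩ := ENNReal.exists_lt_add_of_lt_add h hp hq
  lift a to ℝ≥0 using ha.ne_top
  lift b to ℝ≥0 using hb.ne_top
  exact ⟨a, b, by exact_mod_cast hab.le, Or.inr ha, Or.inr hb⟩

lemma exists_isClosed_nhds_rate_potential_bound {X : Type*} [TopologicalSpace X] [RegularSpace X]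
    {I : X → ℝ≥0∞} (hI : LowerSemicontinuous I) {V : ℝ → X → ℝ≥0∞} {M : ℝ} {x : X}
    (hx : (M : EReal) < I x + lowerEnv V x) :
    ∃ D ∈ 𝓝 x, IsClosed D ∧ ∃ a b : ℝ≥0, M ≤ a + b ∧ (∀ y ∈ D, (a : ℝ≥0∞) ≤ I y) ∧
      ∀ᶠ ε in 𝓝[>] 0, ∀ y ∈ D, (b : ℝ≥0∞) ≤ V ε y := by
  obtain ⟨a, b, hab, ha, hb⟩ := exists_nnreal_le_add_of_lt_add hx
  have hIa : ∀ᶠ y in 𝓝 x, (a : ℝ≥0∞) ≤ I y := by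
    rcases ha with rfl | ha
    · simp
    · exact (hI x _ ha).mono fun _ => le_of_lt
  have hVb : ∀ᶠ p in 𝓝[>] 0 ×ˢ 𝓝 x, (b : ℝ≥0∞) ≤ V p.1 p.2 := by
    rcases hb with rfl | hb
    · simp
    · exact (eventually_lt_of_lt_liminf hb).mono fun _ => le_of_lt
  obtain ⟨E, hE, W, hW, hEW⟩ := eventually_prod_iff.mp hVb
  obtain ⟨D, ⟨hD, hDc⟩, hDsub⟩ := (closed_nhds_basis x).mem_iff.mp (inter_mem hIa hW)
  exact ⟨D, hD, hDc, a, b, hab, fun y hy => (hDsub hy).1,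
    hE.mono fun ε hε y hy => hEW hε (hDsub hy).2⟩

theorem limsup_epsLog_lintegral_le_of_forall_lt {X : Type*} [TopologicalSpace X]
    [RegularSpace X] [MeasurableSpace X] [OpensMeasurableSpace X]
    {μ : ℝ → Measure X} {I : X → ℝ≥0∞} (hIlsc : LowerSemicontinuous I)
    (hIgood : ∀ c : ℝ≥0∞, c ≠ ⊤ → IsCompact {x | I x ≤ c})
    (hLDP : ∀ C : Set X, IsClosed C →
      limsup (fun ε => epsLog ε (μ ε C)) (𝓝[>] 0) ≤ -(⨅ x ∈ C, (I x : EReal)))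
    {V : ℝ → X → ℝ≥0∞} {M : ℝ} (hM : ∀ x, (M : EReal) < I x + lowerEnv V x) :
    limsup (fun ε => epsLog ε (∫⁻ y, expNegDiv' (V ε y) ε ∂(μ ε))) (𝓝[>] 0) ≤ -(M : EReal) := by
  choose D hD hDc a b hab haI hbV using
    fun x => exists_isClosed_nhds_rate_potential_bound hIlsc (hM x)
  obtain ⟨t, -, hcover⟩ := (hIgood (.ofReal M) ENNReal.ofReal_ne_top).elim_nhds_subcover
    (fun x => interior (D x)) fun x _ => interior_mem_nhds.mpr (hD x)
  set S := (⋃ x ∈ t, interior (D x))ᶜ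
  have hSc : IsClosed S := (isOpen_biUnion fun x _ => isOpen_interior).isClosed_compl
  have hS : limsup (fun ε => epsLog ε (μ ε S)) (𝓝[>] 0) ≤ -(M : EReal) := by
    refine limsup_epsLog_le_of_le_rate hLDP hSc fun y hy => ?_
    have hMy : ENNReal.ofReal M < I y := not_le.mp fun hyK => hy (hcover hyK)
    calc (M : EReal) ≤ (ENNReal.ofReal M : EReal) := by
          rw [EReal.coe_ennreal_ofReal]; exact_mod_cast le_max_left M 0
      _ ≤ I y := EReal.coe_ennreal_le_coe_ennreal_iff.mpr hMy.le
  have hDt : ∀ x ∈ t, limsup (fun ε => epsLog ε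
      (ENNReal.ofReal (Real.exp (-b x / ε)) * μ ε (D x))) (𝓝[>] 0) ≤ -(M : EReal) := by
    intro x _
    have hDx := limsup_epsLog_le_of_le_rate hLDP (hDc x) (a := ((a x : ℝ) : EReal))
      fun y hy => by
        rw [← EReal.coe_nnreal_eq_coe_real]
        exact EReal.coe_ennreal_le_coe_ennreal_iff.mpr (haI x y hy)
    refine (limsup_epsLog_exp_mul_le _ hDx).trans ?_
    rw [← EReal.coe_neg, ← EReal.coe_add, ← EReal.coe_neg, EReal.coe_le_coe_iff]
    linarith [hab x]
  have hbound : ∀ᶠ ε in 𝓝[>] 0, ∫⁻ y, expNegDiv' (V ε y) ε ∂(μ ε) ≤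
      μ ε S + ∑ x ∈ t, ENNReal.ofReal (Real.exp (-b x / ε)) * μ ε (D x) := by
    filter_upwards [self_mem_nhdsWithin, (eventually_all_finset t).mpr fun x _ => hbV x]
      with ε hε hVε
    refine lintegral_le_measure_add_sum _ hSc.measurableSet (fun x _ => (hDc x).measurableSet)
      (fun y _ => expNegDiv'_le_one (le_of_lt hε)) ?_
      fun x hx y hy => expNegDiv'_le_ofReal_exp (le_of_lt hε) (hVε x hx y hy)
    rw [compl_compl]
    exact iUnion₂_mono fun x _ => interior_subset
  calc limsup (fun ε => epsLog ε (∫⁻ y, expNegDiv' (V ε y) ε ∂(μ ε))) (𝓝[>] 0)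
      ≤ limsup (fun ε => epsLog ε
          (μ ε S + ∑ x ∈ t, ENNReal.ofReal (Real.exp (-b x / ε)) * μ ε (D x))) (𝓝[>] 0) :=
        limsup_le_limsup (by
          filter_upwards [self_mem_nhdsWithin, hbound] with ε hε h using epsLog_monotone hε h)
    _ ≤ -(M : EReal) := limsup_epsLog_add_le hS (limsup_epsLog_sum_le t _ hDt)

theorem varadhan_upper_bound_eps_potential_general
    {X : Type*} [TopologicalSpace X] [PolishSpace X]
    [MeasurableSpace X] [BorelSpace X]
    (μ : ℝ → Measure X)
    (I : X → ℝ≥0∞)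
    (hIlsc : LowerSemicontinuous I)
    (hIgood : ∀ c : ℝ≥0∞, c ≠ ⊤ → IsCompact {x | I x ≤ c})
    (hLDPupper : ∀ C : Set X, IsClosed C →
      Filter.limsup (fun ε => epsLog ε (μ ε C)) (nhdsWithin 0 (Set.Ioi 0)) ≤
        (-(⨅ x ∈ C, (I x : EReal)) : EReal))
    (V : ℝ → X → ℝ≥0∞) :
    Filter.limsup (fun ε => epsLog ε (∫⁻ x, expNegDiv' (V ε x) ε ∂(μ ε)))
        (nhdsWithin 0 (Set.Ioi 0)) ≤
      (-(⨅ x : X, ((I x : EReal) + (lowerEnv V x : EReal))) : EReal) := by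
  refine le_of_forall_gt_imp_ge_of_dense fun z hz => ?_
  obtain ⟨M, hzM, hML⟩ := EReal.exists_between_coe_real (EReal.neg_lt_comm.mp hz)
  refine (limsup_epsLog_lintegral_le_of_forall_lt hIlsc hIgood hLDPupper
    fun x => hML.trans_le (iInf_le _ x)).trans ?_
  exact (EReal.neg_lt_comm.mp hzM).le

/-- Varadhan upper bound with `ε`-dependent nonnegative potential: if `(μ_ε)` satisfies
the LDP upper bound with a good rate function `I` on a Polish space, and `V_ε` are
measurable `[0,∞]`-valued potentials with lower envelope `V₋`, then
`limsup_{ε→0} ε log ∫ exp(−V_ε/ε) dμ_ε ≤ − inf_X (I + V₋)`. -/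
theorem varadhan_upper_bound_eps_potential
    {X : Type*} [TopologicalSpace X] [PolishSpace X]
    [MeasurableSpace X] [BorelSpace X]
    (μ : ℝ → Measure X) (hprob : ∀ ε > (0:ℝ), IsProbabilityMeasure (μ ε))
    (I : X → ℝ≥0∞)
    (hIlsc : LowerSemicontinuous I)
    (hIgood : ∀ c : ℝ≥0∞, c ≠ ⊤ → IsCompact {x | I x ≤ c})
    (hLDPupper : ∀ C : Set X, IsClosed C →
      Filter.limsup (fun ε => epsLog ε (μ ε C)) (nhdsWithin 0 (Set.Ioi 0)) ≤
        (-(⨅ x ∈ C, (I x : EReal)) : EReal))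
    (V : ℝ → X → ℝ≥0∞) (hVmeas : ∀ ε > (0:ℝ), Measurable (V ε)) :
    Filter.limsup (fun ε => epsLog ε (∫⁻ x, expNegDiv' (V ε x) ε ∂(μ ε)))
        (nhdsWithin 0 (Set.Ioi 0)) ≤
      (-(⨅ x : X, ((I x : EReal) + (lowerEnv V x : EReal))) : EReal) :=
  varadhan_upper_bound_eps_potential_general μ I hIlsc hIgood hLDPupper V
end
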